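/- Let φ : M → S^n be a polyharmonic map of even order k = 2s ≥ 4, expressed in the equator coordinates on S^n with f = φ^n − π/2, and let (F^k)^n be the n-th component of the local right-hand side of the polyharmonic map equation Δu_{k−2} = F^k. Then on any open set D whose closure is compact and contained in the chart domain, there exists a constant C > 0 such that |(F^k)^n| ≤ C( |f| + |df| + Σ_{ℓ=0}^{k−2} |u^n_ℓ| + Σ_{ℓ=0}^{k−3} |v^n_ℓ| + |∇u^n_{k−2}| ). -/

import Mathlib

noncomputable section

open scoped BigOperators

namespace Polyharm

/-- Partial derivative of a scalar function on `ℝ^d` in the `i`-th coordinate direction. -/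
def pd {d : ℕ} (i : Fin d) (f : (Fin d → ℝ) → ℝ) (x : Fin d → ℝ) : ℝ :=
  fderiv ℝ f x (Pi.single i 1)

/-- Euclidean norm of a finite family of real numbers. -/
def vnorm {ι : Type} [Fintype ι] (f : ι → ℝ) : ℝ :=
  Real.sqrt (∑ i, f i ^ 2)

/-- Local-coordinate data for maps between Riemannian manifolds: the inverse metric
`g^{ij}` and the Christoffel symbols `Γ^k_{ij}` of a chart of the domain `(M,g)`, and
the Christoffel symbols `Γ^α_{βγ}` of a chart of the target `(N,h)`. -/
structure ChartData (m n : ℕ) where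
  ginv : (Fin m → ℝ) → Fin m → Fin m → ℝ
  ΓM : (Fin m → ℝ) → Fin m → Fin m → Fin m → ℝ
  ΓN : (Fin n → ℝ) → Fin n → Fin n → Fin n → ℝ

variable {m n : ℕ}

/-- Smoothness of the domain data. -/
def ChartData.SmoothDomain (P : ChartData m n) : Prop :=
  (∀ i j, ContDiff ℝ (⊤ : ℕ∞) fun x => P.ginv x i j) ∧
  (∀ k i j, ContDiff ℝ (⊤ : ℕ∞) fun x => P.ΓM x k i j)

/-- Smoothness of the target Christoffel symbols. -/
def ChartData.SmoothTarget (P : ChartData m n) : Prop :=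
  ∀ α β γ, ContDiff ℝ (⊤ : ℕ∞) fun y => P.ΓN y α β γ

/-- The chart data comes from Riemannian metrics: `g^{ij}` is symmetric and positive
definite, and the Christoffel symbols are symmetric in their lower indices. -/
def ChartData.Riemannian (P : ChartData m n) : Prop :=
  (∀ x i j, P.ginv x i j = P.ginv x j i) ∧
  (∀ x (v : Fin m → ℝ), v ≠ 0 → 0 < ∑ i, ∑ j, P.ginv x i j * v i * v j) ∧
  (∀ x k i j, P.ΓM x k i j = P.ΓM x k j i) ∧
  (∀ y α β γ, P.ΓN y α β γ = P.ΓN y α γ β)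

/-- The Laplace–Beltrami operator on scalar functions:
`-Δ f = g^{ij} ∂²f/∂x^i∂x^j - g^{ij} Γ^k_{ij} ∂f/∂x^k`. -/
def lap (P : ChartData m n) (f : (Fin m → ℝ) → ℝ) (x : Fin m → ℝ) : ℝ :=
  -((∑ i, ∑ j, P.ginv x i j * pd i (fun z => pd j f z) x)
    - ∑ i, ∑ j, ∑ k, P.ginv x i j * P.ΓM x k i j * pd k f x)

/-- `φ_i^β = ∂φ^β/∂x^i`. -/
def dphi (φ : (Fin m → ℝ) → Fin n → ℝ) (x : Fin m → ℝ) (i : Fin m) (β : Fin n) : ℝ :=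
  pd i (fun z => φ z β) x

/-- `⟨dφ^β, dψ^γ⟩ = g^{ij} φ_i^β ψ_j^γ`. -/
def dpair (P : ChartData m n) (φ ψ : (Fin m → ℝ) → Fin n → ℝ) (x : Fin m → ℝ)
    (β γ : Fin n) : ℝ :=
  ∑ i, ∑ j, P.ginv x i j * dphi φ x i β * dphi ψ x j γ

/-- Components `R^α_{δβγ}` of the curvature tensor of the target, with the sign
convention `R(∂/∂y^β, ∂/∂y^γ)∂/∂y^δ = R^α_{δβγ} ∂/∂y^α` of the paper. -/
def Rc (P : ChartData m n) (y : Fin n → ℝ) (α δ β γ : Fin n) : ℝ :=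
  pd β (fun z => P.ΓN z α γ δ) y - pd γ (fun z => P.ΓN z α β δ) y
    + ∑ μ, (P.ΓN y α β μ * P.ΓN y μ γ δ - P.ΓN y α γ μ * P.ΓN y μ β δ)

/-- `2S^α_{βωϑ} = ∂Γ^α_{βϑ}/∂y^ω + Γ^γ_{βϑ}Γ^α_{ωγ} + ∂Γ^α_{ωϑ}/∂y^β + Γ^γ_{ωϑ}Γ^α_{βγ}`. -/
def Scoef (P : ChartData m n) (y : Fin n → ℝ) (α β ω ϑ : Fin n) : ℝ :=
  (pd ω (fun z => P.ΓN z α β ϑ) y + (∑ γ, P.ΓN y γ β ϑ * P.ΓN y α ω γ)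
    + pd β (fun z => P.ΓN z α ω ϑ) y + ∑ γ, P.ΓN y γ ω ϑ * P.ΓN y α β γ) / 2

/-- The operator
`A^α(η,ξ) = ξ_i^ϑ(-2 g^{ij} φ_j^β Γ^α_{βϑ}) + η^ϑ((Δφ^β)Γ^α_{βϑ} - g^{ij} φ_j^β φ_i^ω S^α_{βωϑ})`. -/
def Aop (P : ChartData m n) (φ : (Fin m → ℝ) → Fin n → ℝ) (η : Fin n → ℝ)
    (ξ : Fin m → Fin n → ℝ) (x : Fin m → ℝ) (α : Fin n) : ℝ :=
  (∑ ϑ, ∑ i, ξ i ϑ * (-2 * ∑ j, ∑ β, P.ginv x i j * dphi φ x j β * P.ΓN (φ x) α β ϑ))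
    + ∑ ϑ, η ϑ * ((∑ β, lap P (fun z => φ z β) x * P.ΓN (φ x) α β ϑ)
        - ∑ i, ∑ j, ∑ β, ∑ ω,
            P.ginv x i j * dphi φ x j β * dphi φ x i ω * Scoef P (φ x) α β ω ϑ)

/-- The operator `A` applied to (the components of) a section `σ` of `φ⁻¹TN`:
`A(σ, ∂σ)`. -/
def Asec (P : ChartData m n) (φ σ : (Fin m → ℝ) → Fin n → ℝ) (x : Fin m → ℝ)
    (α : Fin n) : ℝ :=
  Aop P φ (σ x) (fun i ϑ => pd i (fun z => σ z ϑ) x) x α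

/-- Components of the tension field `τ^α(φ) = -Δφ^α + g^{ij} Γ^α_{ϑβ} φ_i^ϑ φ_j^β`. -/
def tension (P : ChartData m n) (φ : (Fin m → ℝ) → Fin n → ℝ) (x : Fin m → ℝ)
    (α : Fin n) : ℝ :=
  -(lap P (fun z => φ z α) x)
    + ∑ i, ∑ j, ∑ ϑ, ∑ β,
        P.ginv x i j * P.ΓN (φ x) α ϑ β * dphi φ x i ϑ * dphi φ x j β

/-- The components `u_j` of `Δ̄^j τ(φ)`: `u_0 = τ(φ)` and
`u_{j+1} = Δ u_j + A(u_j, ∂u_j)` (local expression of the rough Laplacian). -/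
def uvar (P : ChartData m n) (φ : (Fin m → ℝ) → Fin n → ℝ) :
    ℕ → (Fin m → ℝ) → Fin n → ℝ
  | 0 => tension P φ
  | j+1 => fun x α => lap P (fun z => uvar P φ j z α) x + Asec P φ (uvar P φ j) x α

/-- `v_j = du_j`, i.e. `v_{j i}^α = ∂u_j^α/∂x^i`. -/
def vvar (P : ChartData m n) (φ : (Fin m → ℝ) → Fin n → ℝ) (j : ℕ) (x : Fin m → ℝ)
    (i : Fin m) (α : Fin n) : ℝ :=
  pd i (fun z => uvar P φ j z α) x

/-- Components of the pull-back covariant derivative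
`(∇̄_{∂_i} σ)^γ = ∂σ^γ/∂x^i + Γ^γ_{βδ}(φ) φ_i^β σ^δ`. -/
def covD (P : ChartData m n) (φ σ : (Fin m → ℝ) → Fin n → ℝ) (i : Fin m)
    (x : Fin m → ℝ) (γ : Fin n) : ℝ :=
  pd i (fun z => σ z γ) x + ∑ β, ∑ δ, P.ΓN (φ x) γ β δ * dphi φ x i β * σ x δ

/-- `(Tr_g R^N(X, dφ(·))dφ(·))^α`. -/
def trRphi (P : ChartData m n) (φ X : (Fin m → ℝ) → Fin n → ℝ) (x : Fin m → ℝ)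
    (α : Fin n) : ℝ :=
  ∑ i, ∑ j, ∑ β, ∑ γ, ∑ δ,
    P.ginv x i j * Rc P (φ x) α δ β γ * X x β * dphi φ x i γ * dphi φ x j δ

/-- `(Tr_g R^N(dφ(·), X)dφ(·))^α`. -/
def trRphi2 (P : ChartData m n) (φ X : (Fin m → ℝ) → Fin n → ℝ) (x : Fin m → ℝ)
    (α : Fin n) : ℝ :=
  ∑ i, ∑ j, ∑ β, ∑ γ, ∑ δ,
    P.ginv x i j * Rc P (φ x) α δ β γ * dphi φ x i β * X x γ * dphi φ x j δ

/-- `(Tr_g R^N(∇̄_{(·)}W, Z)dφ(·))^α`. -/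
def trRD (P : ChartData m n) (φ W Z : (Fin m → ℝ) → Fin n → ℝ) (x : Fin m → ℝ)
    (α : Fin n) : ℝ :=
  ∑ i, ∑ j, ∑ β, ∑ γ, ∑ δ,
    P.ginv x i j * Rc P (φ x) α δ β γ * covD P φ W i x β * Z x γ * dphi φ x j δ

/-- `(Tr_g R^N(W, ∇̄_{(·)}Z)dφ(·))^α`. -/
def trRD2 (P : ChartData m n) (φ W Z : (Fin m → ℝ) → Fin n → ℝ) (x : Fin m → ℝ)
    (α : Fin n) : ℝ :=
  ∑ i, ∑ j, ∑ β, ∑ γ, ∑ δ,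
    P.ginv x i j * Rc P (φ x) α δ β γ * W x β * covD P φ Z i x γ * dphi φ x j δ

/-- Local components of Maeta's `k`-tension field `τ_k(φ)`, for `k = 2s`:
`τ_{2s}(φ) = Δ̄^{2s-1}τ(φ) - R^N(Δ̄^{2s-2}τ(φ), dφ(e_j))dφ(e_j)
  - Σ_{ℓ=1}^{s-1}( R^N(∇̄_{e_j}Δ̄^{s+ℓ-2}τ(φ), Δ̄^{s-ℓ-1}τ(φ))dφ(e_j)
                 - R^N(Δ̄^{s+ℓ-2}τ(φ), ∇̄_{e_j}Δ̄^{s-ℓ-1}τ(φ))dφ(e_j) )`,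
and for `k = 2s+1`:
`τ_{2s+1}(φ) = Δ̄^{2s}τ(φ) - R^N(Δ̄^{2s-1}τ(φ), dφ(e_j))dφ(e_j)
  - Σ_{ℓ=1}^{s-1}( R^N(∇̄_{e_j}Δ̄^{s+ℓ-1}τ(φ), Δ̄^{s-ℓ-1}τ(φ))dφ(e_j)
                 - R^N(Δ̄^{s+ℓ-1}τ(φ), ∇̄_{e_j}Δ̄^{s-ℓ-1}τ(φ))dφ(e_j) )
  - R^N(∇̄_{e_j}Δ̄^{s-1}τ(φ), Δ̄^{s-1}τ(φ))dφ(e_j)`. -/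
def tauK (P : ChartData m n) (φ : (Fin m → ℝ) → Fin n → ℝ) (k : ℕ) (x : Fin m → ℝ)
    (α : Fin n) : ℝ :=
  if Even k then
    uvar P φ (k-1) x α - trRphi P φ (uvar P φ (k-2)) x α
      - ∑ ℓ ∈ Finset.Icc 1 (k/2 - 1),
          (trRD P φ (uvar P φ (k/2 + ℓ - 2)) (uvar P φ (k/2 - ℓ - 1)) x α
            - trRD2 P φ (uvar P φ (k/2 + ℓ - 2)) (uvar P φ (k/2 - ℓ - 1)) x α)
  else
    uvar P φ (k-1) x α - trRphi P φ (uvar P φ (k-2)) x α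
      - (∑ ℓ ∈ Finset.Icc 1 (k/2 - 1),
          (trRD P φ (uvar P φ (k/2 + ℓ - 1)) (uvar P φ (k/2 - ℓ - 1)) x α
            - trRD2 P φ (uvar P φ (k/2 + ℓ - 1)) (uvar P φ (k/2 - ℓ - 1)) x α))
      - trRD P φ (uvar P φ (k/2 - 1)) (uvar P φ (k/2 - 1)) x α

/-- Components `(∇dφ)(∂_i,∂_j)^α` of the second fundamental form of `φ`. -/
def sff (P : ChartData m n) (φ : (Fin m → ℝ) → Fin n → ℝ) (x : Fin m → ℝ)
    (i j : Fin m) (α : Fin n) : ℝ :=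
  pd i (fun z => dphi φ z j α) x - (∑ k, P.ΓM x k i j * dphi φ x k α)
    + ∑ β, ∑ γ, P.ΓN (φ x) α β γ * dphi φ x i β * dphi φ x j γ

/-- Christoffel symbols `Γ^α_{βγ}` of the round sphere `S^{d+1}` in the equator
coordinates `S^{d+1}∖{N,S} = (S^d × (0,π), sin²s·g̃ + ds²)`: here `gt = g̃` and
`Γt = Γ̃` are the metric and the Christoffel symbols of the equator `S^d`, the last
coordinate is `s`, and
`Γ^a_{bc} = Γ̃^a_{bc}`, `Γ^n_{bc} = -½ sin(2s) g̃_{bc}`,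
`Γ^a_{nn} = Γ^n_{nn} = Γ^n_{bn} = 0`, `Γ^a_{bn} = (cos s/sin s)δ^a_b`. -/
def sphereΓ (d : ℕ) (gt : (Fin d → ℝ) → Fin d → Fin d → ℝ)
    (Γt : (Fin d → ℝ) → Fin d → Fin d → Fin d → ℝ) :
    (Fin (d+1) → ℝ) → Fin (d+1) → Fin (d+1) → Fin (d+1) → ℝ :=
  fun y α β γ =>
    let s : ℝ := y (Fin.last d)
    let yt : Fin d → ℝ := fun a => y (Fin.castSucc a)
    if hα : (α : ℕ) < d then
      if hβ : (β : ℕ) < d then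
        if hγ : (γ : ℕ) < d then Γt yt ⟨α.1, hα⟩ ⟨β.1, hβ⟩ ⟨γ.1, hγ⟩
        else (Real.cos s / Real.sin s) * (if (α : ℕ) = (β : ℕ) then 1 else 0)
      else
        if (γ : ℕ) < d then
          (Real.cos s / Real.sin s) * (if (α : ℕ) = (γ : ℕ) then 1 else 0)
        else 0
    else
      if hβ : (β : ℕ) < d then
        if hγ : (γ : ℕ) < d then -(1/2) * Real.sin (2*s) * gt yt ⟨β.1, hβ⟩ ⟨γ.1, hγ⟩
        else 0
      else 0

/-- Components of the round metric `sin²s·g̃ + ds²` of `S^{d+1}` in equator coordinates. -/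
def sphereMet (d : ℕ) (gt : (Fin d → ℝ) → Fin d → Fin d → ℝ) :
    (Fin (d+1) → ℝ) → Fin (d+1) → Fin (d+1) → ℝ :=
  fun y β γ =>
    let s : ℝ := y (Fin.last d)
    let yt : Fin d → ℝ := fun a => y (Fin.castSucc a)
    if hβ : (β : ℕ) < d then
      if hγ : (γ : ℕ) < d then Real.sin s ^ 2 * gt yt ⟨β.1, hβ⟩ ⟨γ.1, hγ⟩ else 0
    else if (γ : ℕ) < d then 0 else 1

/-- `gt` is a Riemannian metric on the chart of `S^d` and `Γt` is the family of
Christoffel symbols of its Levi-Civita connection. -/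
def LeviCivita (d : ℕ) (gt : (Fin d → ℝ) → Fin d → Fin d → ℝ)
    (Γt : (Fin d → ℝ) → Fin d → Fin d → Fin d → ℝ) : Prop :=
  (∀ y a b, gt y a b = gt y b a) ∧
  (∀ y (v : Fin d → ℝ), v ≠ 0 → 0 < ∑ a, ∑ b, gt y a b * v a * v b) ∧
  (∀ y a b c, Γt y a b c = Γt y a c b) ∧
  (∀ y a b c, pd c (fun z => gt z a b) y
    = (∑ e, gt y e b * Γt y e c a) + ∑ e, gt y a e * Γt y e c b)

/-- `E^α_{βδϑη} = R^α_{βγδ}Γ^γ_{ϑη} + R^α_{βγϑ}Γ^γ_{δη}`. -/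
def Ecoef (P : ChartData m n) (y : Fin n → ℝ) (α β δ ϑ η : Fin n) : ℝ :=
  ∑ γ, (Rc P y α β γ δ * P.ΓN y γ ϑ η + Rc P y α β γ ϑ * P.ΓN y γ δ η)

/-- `⟨v^γ, dφ^β⟩ = g^{ij} v_i^γ φ_j^β`. -/
def vpair (P : ChartData m n) (φ : (Fin m → ℝ) → Fin n → ℝ) (v : Fin m → Fin n → ℝ)
    (x : Fin m → ℝ) (γ β : Fin n) : ℝ :=
  ∑ i, ∑ j, P.ginv x i j * v i γ * dphi φ x j β

/-- The explicit local right-hand side `F^k` of the polyharmonic map equation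
`Δu_{k-2}^α = (F^k)^α` for even order `k = 2s ≥ 4`:
`(F^k)^α = -A_{k-1}^α - u_{k-2}^δ⟨dφ^γ,dφ^β⟩R^α_{βγδ}
 + Σ_{ℓ=1}^{k/2-1}( u^δ_{k/2-ℓ-1}⟨v^γ_{k/2+ℓ-2},dφ^β⟩R^α_{βγδ}
   + u^ϑ_{k/2+ℓ-2}u^δ_{k/2-ℓ-1}⟨dφ^η,dφ^β⟩E^α_{βδϑη}
   + u^δ_{k/2+ℓ-2}⟨v^γ_{k/2-ℓ-1},dφ^β⟩R^α_{βγδ} )`. -/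
def FkEven (P : ChartData m n) (φ : (Fin m → ℝ) → Fin n → ℝ) (k : ℕ) (x : Fin m → ℝ)
    (α : Fin n) : ℝ :=
  -Asec P φ (uvar P φ (k-2)) x α
    - (∑ δ, ∑ γ, ∑ β, uvar P φ (k-2) x δ * dpair P φ φ x γ β * Rc P (φ x) α β γ δ)
    + ∑ ℓ ∈ Finset.Icc 1 (k/2 - 1),
        ((∑ δ, ∑ γ, ∑ β, uvar P φ (k/2 - ℓ - 1) x δ *
            vpair P φ (vvar P φ (k/2 + ℓ - 2) x) x γ β * Rc P (φ x) α β γ δ)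
          + (∑ ϑ, ∑ δ, ∑ η, ∑ β, uvar P φ (k/2 + ℓ - 2) x ϑ * uvar P φ (k/2 - ℓ - 1) x δ *
              dpair P φ φ x η β * Ecoef P (φ x) α β δ ϑ η)
          + ∑ δ, ∑ γ, ∑ β, uvar P φ (k/2 + ℓ - 2) x δ *
              vpair P φ (vvar P φ (k/2 - ℓ - 1) x) x γ β * Rc P (φ x) α β γ δ)

/-- The explicit local right-hand side `F^k` of the polyharmonic map equation
for even `k = 2s ≥ 4`, as written in the sphere computation of the paper:
`(F^k)^n = -A^n_{k-1} - u^δ_{k-2}⟨dφ^γ,dφ^β⟩R^n_{βγδ}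
 - Σ_{ℓ=1}^{k/2-1}( u^δ_{k/2-ℓ-1}⟨v^γ_{k/2+ℓ-2},dφ^β⟩R^n_{βγδ}
   + u^ϑ_{k/2+ℓ-2}u^δ_{k/2-ℓ-1}⟨dφ^η,dφ^β⟩E^n_{βδϑη}
   + u^δ_{k/2+ℓ-2}⟨v^γ_{k/2-ℓ-1},dφ^β⟩R^n_{βγδ} )`. -/
def FkEvenSph (P : ChartData m n) (φ : (Fin m → ℝ) → Fin n → ℝ) (k : ℕ)
    (x : Fin m → ℝ) (α : Fin n) : ℝ :=
  -Asec P φ (uvar P φ (k-2)) x α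
    - (∑ δ, ∑ γ, ∑ β, uvar P φ (k-2) x δ * dpair P φ φ x γ β * Rc P (φ x) α β γ δ)
    - ∑ ℓ ∈ Finset.Icc 1 (k/2 - 1),
        ((∑ δ, ∑ γ, ∑ β, uvar P φ (k/2 - ℓ - 1) x δ *
            vpair P φ (vvar P φ (k/2 + ℓ - 2) x) x γ β * Rc P (φ x) α β γ δ)
          + (∑ ϑ, ∑ δ, ∑ η, ∑ β, uvar P φ (k/2 + ℓ - 2) x ϑ * uvar P φ (k/2 - ℓ - 1) x δ *
              dpair P φ φ x η β * Ecoef P (φ x) α β δ ϑ η)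
          + ∑ δ, ∑ γ, ∑ β, uvar P φ (k/2 + ℓ - 2) x δ *
              vpair P φ (vvar P φ (k/2 - ℓ - 1) x) x γ β * Rc P (φ x) α β γ δ)

/-! In the equator chart the only Christoffel symbols with upper index `n` that do not vanish
are `Γ^n_{bc} = -½ sin(2s) g̃_{bc}`, and `|sin 2s| = |sin 2f| ≤ 2|f|`; so `Γ^n_{βγ}` and its
tangential derivatives are `O(|f|)`, while `R^n_{abc} = 0` for tangential indices. Expanding
`(F^k)^n` index by index, every summand either vanishes or contains one of the factors
`Γ^n_{βγ}`, `∂_a Γ^n_{βγ}`, `S^n_{abϑ}`, `E^n_{abcη}`, `df`, `u^n_ℓ`, `v^n_ℓ`; the remaining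
factors are smooth, hence bounded on the compact set `closure D`. -/

open Asymptotics Filter

section PartialDerivatives

variable {N : ℕ}

lemma contDiffOn_pd {f : (Fin N → ℝ) → ℝ} {V : Set (Fin N → ℝ)} (hV : IsOpen V)
    (hf : ContDiffOn ℝ (⊤ : ℕ∞) f V) (i : Fin N) : ContDiffOn ℝ (⊤ : ℕ∞) (pd i f) V :=
  (ContinuousLinearMap.apply ℝ ℝ (Pi.single i 1)).contDiff.comp_contDiffOn
    (hf.fderiv_of_isOpen hV le_rfl)

lemma contDiff_pd {f : (Fin N → ℝ) → ℝ} (hf : ContDiff ℝ (⊤ : ℕ∞) f) (i : Fin N) :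
    ContDiff ℝ (⊤ : ℕ∞) (pd i f) :=
  contDiffOn_univ.1 (contDiffOn_pd isOpen_univ hf.contDiffOn i)

lemma pd_eq_zero_of_forall_eq_zero {f : (Fin N → ℝ) → ℝ} (hf : ∀ y, f y = 0) (i : Fin N)
    (y : Fin N → ℝ) : pd i f y = 0 := by
  simp [pd, funext hf]

lemma pd_sub_const (f : (Fin N → ℝ) → ℝ) (c : ℝ) (i : Fin N) (y : Fin N → ℝ) :
    pd i (fun z => f z - c) y = pd i f y := by
  simp [pd, fderiv_sub_const]

lemma pd_castSucc_mul_init {A : ℝ → ℝ} {G : (Fin N → ℝ) → ℝ} {y : Fin (N+1) → ℝ}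
    (hA : DifferentiableAt ℝ A (y (Fin.last N))) (hG : DifferentiableAt ℝ G (Fin.init y))
    (a : Fin N) :
    pd a.castSucc (fun z => A (z (Fin.last N)) * G (Fin.init z)) y
      = A (y (Fin.last N)) * pd a G (Fin.init y) := by
  let L : (Fin (N+1) → ℝ) →L[ℝ] (Fin N → ℝ) :=
    ContinuousLinearMap.pi fun e => ContinuousLinearMap.proj e.castSucc
  have hL : L (Pi.single a.castSucc 1) = Pi.single a 1 := by
    ext e; simp [L, Pi.single_apply, Fin.castSucc_inj]
  have hAs : HasFDerivAt (fun z : Fin (N+1) → ℝ => A (z (Fin.last N)))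
      (deriv A (y (Fin.last N)) • ContinuousLinearMap.proj (Fin.last N)) y :=
    hA.hasDerivAt.comp_hasFDerivAt y
      (ContinuousLinearMap.proj (R := ℝ) (φ := fun _ : Fin (N+1) => ℝ) (Fin.last N)).hasFDerivAt
  have hGs : HasFDerivAt (fun z : Fin (N+1) → ℝ => G (Fin.init z))
      ((fderiv ℝ G (Fin.init y)).comp L) y :=
    hG.hasFDerivAt.comp y L.hasFDerivAt
  rw [pd, (hAs.fun_mul hGs).fderiv]
  simp [hL, pd]

end PartialDerivatives

section SphereChristoffel

variable {d : ℕ} {gt : (Fin d → ℝ) → Fin d → Fin d → ℝ}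
  {Γt : (Fin d → ℝ) → Fin d → Fin d → Fin d → ℝ}

lemma sphereΓ_last_castSucc_castSucc (y : Fin (d+1) → ℝ) (b c : Fin d) :
    sphereΓ d gt Γt y (Fin.last d) b.castSucc c.castSucc
      = -(1/2) * Real.sin (2 * y (Fin.last d)) * gt (Fin.init y) b c := by
  change _ = _ * gt (fun e => y e.castSucc) b c
  simp [sphereΓ]

lemma sphereΓ_last_castSucc_last (y : Fin (d+1) → ℝ) (b : Fin d) :
    sphereΓ d gt Γt y (Fin.last d) b.castSucc (Fin.last d) = 0 := by
  simp [sphereΓ]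

lemma sphereΓ_last_last (y : Fin (d+1) → ℝ) (γ : Fin (d+1)) :
    sphereΓ d gt Γt y (Fin.last d) (Fin.last d) γ = 0 := by
  simp [sphereΓ]

lemma sphereΓ_castSucc_castSucc_castSucc (y : Fin (d+1) → ℝ) (a b c : Fin d) :
    sphereΓ d gt Γt y a.castSucc b.castSucc c.castSucc = Γt (Fin.init y) a b c := by
  change _ = Γt (fun e => y e.castSucc) a b c
  simp [sphereΓ]

lemma contDiffOn_sphereΓ (hgt : ∀ a b, ContDiff ℝ (⊤ : ℕ∞) fun y => gt y a b)
    (hΓt : ∀ a b c, ContDiff ℝ (⊤ : ℕ∞) fun y => Γt y a b c) (α β γ : Fin (d+1)) :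
    ContDiffOn ℝ (⊤ : ℕ∞) (fun y => sphereΓ d gt Γt y α β γ)
      {y | Real.sin (y (Fin.last d)) ≠ 0} := by
  have hinit : ContDiff ℝ (⊤ : ℕ∞) fun y : Fin (d+1) → ℝ => fun e : Fin d => y e.castSucc :=
    contDiff_pi.2 fun e => contDiff_apply ℝ ℝ e.castSucc
  have hs : ContDiff ℝ (⊤ : ℕ∞) fun y : Fin (d+1) → ℝ => y (Fin.last d) :=
    contDiff_apply ℝ ℝ (Fin.last d)
  have hcot : ContDiffOn ℝ (⊤ : ℕ∞)
      (fun y : Fin (d+1) → ℝ => Real.cos (y (Fin.last d)) / Real.sin (y (Fin.last d)))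
      {y | Real.sin (y (Fin.last d)) ≠ 0} :=
    (Real.contDiff_cos.comp hs).contDiffOn.div (Real.contDiff_sin.comp hs).contDiffOn
      fun y hy => hy
  simp only [sphereΓ]
  split_ifs
  all_goals first
    | exact contDiffOn_const
    | exact hcot.mul contDiffOn_const
    | exact ((hΓt _ _ _).comp hinit).contDiffOn
    | exact ((contDiff_const.mul (Real.contDiff_sin.comp (contDiff_const.mul hs))).mul
        ((hgt _ _).comp hinit)).contDiffOn

lemma pd_castSucc_sphereΓ_last (hgt : ∀ a b, ContDiff ℝ (⊤ : ℕ∞) fun y => gt y a b)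
    (y : Fin (d+1) → ℝ) (a b c : Fin d) :
    pd a.castSucc (fun z => sphereΓ d gt Γt z (Fin.last d) b.castSucc c.castSucc) y
      = -(1/2) * Real.sin (2 * y (Fin.last d)) * pd a (fun w => gt w b c) (Fin.init y) := by
  simp only [sphereΓ_last_castSucc_castSucc]
  exact pd_castSucc_mul_init (A := fun s => -(1/2) * Real.sin (2 * s)) (by fun_prop)
    ((hgt b c).differentiable (by simp) _) a

/-- Codazzi equation for the slices `s = const`: their second fundamental form
`Γ^n_{bc} = -½ sin(2s) g̃_{bc}` is parallel, by metric compatibility of `Γ̃`. -/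
lemma Rc_last_castSucc_eq_zero {m : ℕ} {P : ChartData m (d+1)} (hΓN : P.ΓN = sphereΓ d gt Γt)
    (hgt : ∀ a b, ContDiff ℝ (⊤ : ℕ∞) fun y => gt y a b) (hLC : LeviCivita d gt Γt)
    (y : Fin (d+1) → ℝ) (a b c : Fin d) :
    Rc P y (Fin.last d) a.castSucc b.castSucc c.castSucc = 0 := by
  obtain ⟨-, -, hΓsym, hcompat⟩ := hLC
  simp only [Rc, hΓN]
  rw [pd_castSucc_sphereΓ_last hgt, pd_castSucc_sphereΓ_last hgt]
  simp only [Fin.sum_univ_castSucc,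
    sphereΓ_last_castSucc_castSucc, sphereΓ_castSucc_castSucc_castSucc,
    sphereΓ_last_castSucc_last, zero_mul, sub_zero, add_zero]
  rw [hcompat, hcompat]
  simp only [Finset.sum_sub_distrib, mul_assoc, ← Finset.mul_sum, hΓsym _ _ c b]
  ring

end SphereChristoffel

section Smoothness

variable {m n : ℕ} {P : ChartData m n} {φ : (Fin m → ℝ) → Fin n → ℝ}

lemma contDiff_dphi (hφ : ContDiff ℝ (⊤ : ℕ∞) φ) (i : Fin m) (β : Fin n) :
    ContDiff ℝ (⊤ : ℕ∞) fun x => dphi φ x i β :=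
  contDiff_pd (by fun_prop) i

lemma contDiff_lap (hP : P.SmoothDomain) {f : (Fin m → ℝ) → ℝ} (hf : ContDiff ℝ (⊤ : ℕ∞) f) :
    ContDiff ℝ (⊤ : ℕ∞) (lap P f) := by
  have := hP.1; have := hP.2; have := contDiff_pd hf
  have := fun i j => contDiff_pd (contDiff_pd hf j) i
  unfold lap; fun_prop

lemma contDiff_Rc_comp (hΓ : ∀ α β γ, ContDiff ℝ (⊤ : ℕ∞) fun x => P.ΓN (φ x) α β γ)
    (hdΓ : ∀ i α β γ, ContDiff ℝ (⊤ : ℕ∞) fun x => pd i (fun y => P.ΓN y α β γ) (φ x))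
    (α δ β γ : Fin n) : ContDiff ℝ (⊤ : ℕ∞) fun x => Rc P (φ x) α δ β γ := by
  unfold Rc; fun_prop

lemma contDiff_Scoef_comp (hΓ : ∀ α β γ, ContDiff ℝ (⊤ : ℕ∞) fun x => P.ΓN (φ x) α β γ)
    (hdΓ : ∀ i α β γ, ContDiff ℝ (⊤ : ℕ∞) fun x => pd i (fun y => P.ΓN y α β γ) (φ x))
    (α β ω ϑ : Fin n) : ContDiff ℝ (⊤ : ℕ∞) fun x => Scoef P (φ x) α β ω ϑ := by
  unfold Scoef; fun_prop

lemma contDiff_Ecoef_comp (hΓ : ∀ α β γ, ContDiff ℝ (⊤ : ℕ∞) fun x => P.ΓN (φ x) α β γ)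
    (hdΓ : ∀ i α β γ, ContDiff ℝ (⊤ : ℕ∞) fun x => pd i (fun y => P.ΓN y α β γ) (φ x))
    (α β δ ϑ η : Fin n) : ContDiff ℝ (⊤ : ℕ∞) fun x => Ecoef P (φ x) α β δ ϑ η := by
  have := contDiff_Rc_comp hΓ hdΓ
  unfold Ecoef; fun_prop

lemma contDiff_uvar (hP : P.SmoothDomain) (hφ : ContDiff ℝ (⊤ : ℕ∞) φ)
    (hΓ : ∀ α β γ, ContDiff ℝ (⊤ : ℕ∞) fun x => P.ΓN (φ x) α β γ)
    (hdΓ : ∀ i α β γ, ContDiff ℝ (⊤ : ℕ∞) fun x => pd i (fun y => P.ΓN y α β γ) (φ x))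
    (j : ℕ) (α : Fin n) : ContDiff ℝ (⊤ : ℕ∞) fun x => uvar P φ j x α := by
  have := hP.1; have := contDiff_dphi hφ
  have := fun β => contDiff_lap hP (f := fun z => φ z β) (by fun_prop)
  have := contDiff_Scoef_comp hΓ hdΓ
  induction j generalizing α with
  | zero => unfold uvar tension; fun_prop
  | succ j ih =>
    have := fun β i => contDiff_pd (ih β) i
    have := contDiff_lap hP (ih α)
    simp only [uvar, Asec, Aop]; fun_prop

lemma contDiff_vvar (hP : P.SmoothDomain) (hφ : ContDiff ℝ (⊤ : ℕ∞) φ)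
    (hΓ : ∀ α β γ, ContDiff ℝ (⊤ : ℕ∞) fun x => P.ΓN (φ x) α β γ)
    (hdΓ : ∀ i α β γ, ContDiff ℝ (⊤ : ℕ∞) fun x => pd i (fun y => P.ΓN y α β γ) (φ x))
    (j : ℕ) (i : Fin m) (α : Fin n) : ContDiff ℝ (⊤ : ℕ∞) fun x => vvar P φ j x i α :=
  contDiff_pd (contDiff_uvar hP hφ hΓ hdΓ j α) i

end Smoothness

section Contractions

variable {α : Type*} {l : Filter α} {B : α → ℝ}

theorem _root_.Asymptotics.IsBigO.bounded_mul {f g : α → ℝ} (hf : f =O[l] fun _ => (1 : ℝ))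
    (hg : g =O[l] B) : (fun x => f x * g x) =O[l] B := by
  simpa using hf.mul hg

theorem _root_.Asymptotics.IsBigO.mul_bounded {f g : α → ℝ} (hg : g =O[l] B)
    (hf : f =O[l] fun _ => (1 : ℝ)) : (fun x => g x * f x) =O[l] B := by
  simpa using hg.mul hf

lemma isBigO_bilinear_of_left {ι κ : Type*} [Fintype ι] [Fintype κ] {g : ι → κ → α → ℝ}
    {a : ι → α → ℝ} {b : κ → α → ℝ} (hg : ∀ i j, g i j =O[l] fun _ => (1 : ℝ))
    (ha : ∀ i, a i =O[l] B) (hb : ∀ j, b j =O[l] fun _ => (1 : ℝ)) :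
    (fun x => ∑ i, ∑ j, g i j x * a i x * b j x) =O[l] B :=
  IsBigO.fun_sum fun i _ => IsBigO.fun_sum fun j _ =>
    ((hg i j).bounded_mul (ha i)).mul_bounded (hb j)

lemma isBigO_bilinear_of_right {ι κ : Type*} [Fintype ι] [Fintype κ] {g : ι → κ → α → ℝ}
    {a : ι → α → ℝ} {b : κ → α → ℝ} (hg : ∀ i j, g i j =O[l] fun _ => (1 : ℝ))
    (ha : ∀ i, a i =O[l] fun _ => (1 : ℝ)) (hb : ∀ j, b j =O[l] B) :
    (fun x => ∑ i, ∑ j, g i j x * a i x * b j x) =O[l] B :=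
  IsBigO.fun_sum fun i _ => IsBigO.fun_sum fun j _ =>
    ((hg i j).bounded_mul (ha i)).bounded_mul (hb j)

variable {d : ℕ}

lemma isBigO_curvature_contraction {X : Fin (d+1) → α → ℝ} {Q : Fin (d+1) → Fin (d+1) → α → ℝ}
    {R : Fin (d+1) → Fin (d+1) → Fin (d+1) → α → ℝ}
    (hX : ∀ δ, X δ =O[l] fun _ => (1 : ℝ)) (hQ : ∀ γ β, Q γ β =O[l] fun _ => (1 : ℝ))
    (hR : ∀ β γ δ, R β γ δ =O[l] fun _ => (1 : ℝ))
    (hXn : X (Fin.last d) =O[l] B) (hQn : ∀ β, Q (Fin.last d) β =O[l] B)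
    (hQn' : ∀ γ, Q γ (Fin.last d) =O[l] B)
    (hR0 : ∀ (a b c : Fin d) x, R a.castSucc b.castSucc c.castSucc x = 0) :
    (fun x => ∑ δ, ∑ γ, ∑ β, X δ x * Q γ β x * R β γ δ x) =O[l] B := by
  refine IsBigO.fun_sum fun δ _ => IsBigO.fun_sum fun γ _ => IsBigO.fun_sum fun β _ => ?_
  obtain ⟨δ, rfl⟩ | rfl := Fin.eq_castSucc_or_eq_last δ
  · obtain ⟨γ, rfl⟩ | rfl := Fin.eq_castSucc_or_eq_last γ
    · obtain ⟨β, rfl⟩ | rfl := Fin.eq_castSucc_or_eq_last β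
      · simpa only [hR0, mul_zero] using isBigO_zero B l
      · exact ((hX _).bounded_mul (hQn' _)).mul_bounded (hR _ _ _)
    · exact ((hX _).bounded_mul (hQn _)).mul_bounded (hR _ _ _)
  · exact (hXn.mul_bounded (hQ _ _)).mul_bounded (hR _ _ _)

lemma isBigO_Ecoef_contraction {X Y : Fin (d+1) → α → ℝ} {Q : Fin (d+1) → Fin (d+1) → α → ℝ}
    {E : Fin (d+1) → Fin (d+1) → Fin (d+1) → Fin (d+1) → α → ℝ}
    (hX : ∀ ϑ, X ϑ =O[l] fun _ => (1 : ℝ)) (hY : ∀ δ, Y δ =O[l] fun _ => (1 : ℝ))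
    (hQ : ∀ η β, Q η β =O[l] fun _ => (1 : ℝ))
    (hE : ∀ β δ ϑ η, E β δ ϑ η =O[l] fun _ => (1 : ℝ))
    (hXn : X (Fin.last d) =O[l] B) (hYn : Y (Fin.last d) =O[l] B)
    (hQn : ∀ β, Q (Fin.last d) β =O[l] B) (hQn' : ∀ η, Q η (Fin.last d) =O[l] B)
    (hEn : ∀ (b c t : Fin d) η, E b.castSucc c.castSucc t.castSucc η =O[l] B) :
    (fun x => ∑ ϑ, ∑ δ, ∑ η, ∑ β, X ϑ x * Y δ x * Q η β x * E β δ ϑ η x) =O[l] B := by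
  refine IsBigO.fun_sum fun ϑ _ => IsBigO.fun_sum fun δ _ => IsBigO.fun_sum fun η _ =>
    IsBigO.fun_sum fun β _ => ?_
  obtain ⟨ϑ, rfl⟩ | rfl := Fin.eq_castSucc_or_eq_last ϑ
  · obtain ⟨δ, rfl⟩ | rfl := Fin.eq_castSucc_or_eq_last δ
    · obtain ⟨η, rfl⟩ | rfl := Fin.eq_castSucc_or_eq_last η
      · obtain ⟨β, rfl⟩ | rfl := Fin.eq_castSucc_or_eq_last β
        · exact (((hX _).bounded_mul (hY _)).bounded_mul (hQ _ _)).bounded_mul (hEn _ _ _ _)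
        · exact (((hX _).bounded_mul (hY _)).bounded_mul (hQn' _)).mul_bounded (hE _ _ _ _)
      · exact (((hX _).bounded_mul (hY _)).bounded_mul (hQn _)).mul_bounded (hE _ _ _ _)
    · exact (((hX _).bounded_mul hYn).mul_bounded (hQ _ _)).mul_bounded (hE _ _ _ _)
  · exact ((hXn.mul_bounded (hY _)).mul_bounded (hQ _ _)).mul_bounded (hE _ _ _ _)

end Contractions

lemma abs_sin_two_mul_le (s : ℝ) : |Real.sin (2 * s)| ≤ 2 * |s - Real.pi / 2| := by
  have h : Real.sin (2 * s) = -Real.sin (2 * (s - Real.pi / 2)) := by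
    rw [← Real.sin_add_pi]; ring_nf
  calc |Real.sin (2 * s)| = |Real.sin (2 * (s - Real.pi / 2))| := by rw [h, abs_neg]
    _ ≤ |2 * (s - Real.pi / 2)| := Real.abs_sin_le_abs
    _ = 2 * |s - Real.pi / 2| := by rw [abs_mul, abs_two]

lemma isBigO_one_of_contDiff {m : ℕ} {D : Set (Fin m → ℝ)} (hD : IsCompact (closure D))
    {F : (Fin m → ℝ) → ℝ} (hF : ContDiff ℝ (⊤ : ℕ∞) F) :
    F =O[𝓟 D] fun _ => (1 : ℝ) :=
  (hF.continuous.continuousOn.isBigO_principal hD (by norm_num)).mono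
    (principal_mono.2 subset_closure)

section SphereEstimates

variable {m d : ℕ} {P : ChartData m (d+1)} {gt : (Fin d → ℝ) → Fin d → Fin d → ℝ}
  {Γt : (Fin d → ℝ) → Fin d → Fin d → Fin d → ℝ} {φ : (Fin m → ℝ) → Fin (d+1) → ℝ}
  {D : Set (Fin m → ℝ)} {B : (Fin m → ℝ) → ℝ}
  (hΓN : P.ΓN = sphereΓ d gt Γt) (hgt : ∀ a b, ContDiff ℝ (⊤ : ℕ∞) fun y => gt y a b)
  (hΓt : ∀ a b c, ContDiff ℝ (⊤ : ℕ∞) fun y => Γt y a b c) (hLC : LeviCivita d gt Γt)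
  (hP : P.SmoothDomain) (hφ : ContDiff ℝ (⊤ : ℕ∞) φ)
  (hchart : ∀ x, 0 < φ x (Fin.last d) ∧ φ x (Fin.last d) < Real.pi)
  (hD : IsCompact (closure D))
  (hf : (fun x => φ x (Fin.last d) - Real.pi / 2) =O[𝓟 D] B)
  (hdf : ∀ i, (fun x => dphi φ x i (Fin.last d)) =O[𝓟 D] B)

include hφ in
lemma contDiff_init_comp : ContDiff ℝ (⊤ : ℕ∞) fun x => Fin.init (φ x) :=
  contDiff_pi.2 fun e => (contDiff_apply ℝ ℝ e.castSucc).comp hφ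

include hΓN hgt hΓt hφ hchart in
lemma contDiff_ΓN_comp (α β γ : Fin (d+1)) :
    ContDiff ℝ (⊤ : ℕ∞) fun x => P.ΓN (φ x) α β γ := by
  rw [hΓN]
  exact (contDiffOn_sphereΓ hgt hΓt α β γ).comp_contDiff hφ
    fun x => (Real.sin_pos_of_pos_of_lt_pi (hchart x).1 (hchart x).2).ne'

include hΓN hgt hΓt hφ hchart in
lemma contDiff_pd_ΓN_comp (i α β γ : Fin (d+1)) :
    ContDiff ℝ (⊤ : ℕ∞) fun x => pd i (fun y => P.ΓN y α β γ) (φ x) := by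
  have hV : IsOpen {y : Fin (d+1) → ℝ | Real.sin (y (Fin.last d)) ≠ 0} :=
    isOpen_ne_fun (by fun_prop) continuous_const
  rw [hΓN]
  exact (contDiffOn_pd hV (contDiffOn_sphereΓ hgt hΓt α β γ) i).comp_contDiff hφ
    fun x => (Real.sin_pos_of_pos_of_lt_pi (hchart x).1 (hchart x).2).ne'

include hf in
lemma isBigO_sin_two_mul_comp : (fun x => Real.sin (2 * φ x (Fin.last d))) =O[𝓟 D] B :=
  (IsBigO.of_bound 2 (Eventually.of_forall fun x => by
    simpa only [Real.norm_eq_abs] using abs_sin_two_mul_le _)).trans hf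

include hΓN hgt hφ hD hf in
lemma isBigO_ΓN_last (β γ : Fin (d+1)) :
    (fun x => P.ΓN (φ x) (Fin.last d) β γ) =O[𝓟 D] B := by
  simp only [hΓN]
  obtain ⟨b, rfl⟩ | rfl := Fin.eq_castSucc_or_eq_last β
  · obtain ⟨c, rfl⟩ | rfl := Fin.eq_castSucc_or_eq_last γ
    · simp only [sphereΓ_last_castSucc_castSucc]
      exact ((isBigO_sin_two_mul_comp hf).const_mul_left _).mul_bounded
        (isBigO_one_of_contDiff hD ((hgt b c).comp (contDiff_init_comp hφ)))
    · simpa only [sphereΓ_last_castSucc_last] using isBigO_zero B (𝓟 D)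
  · simpa only [sphereΓ_last_last] using isBigO_zero B (𝓟 D)

include hΓN hgt hφ hD hf in
lemma isBigO_pd_ΓN_last (a : Fin d) (β γ : Fin (d+1)) :
    (fun x => pd a.castSucc (fun y => P.ΓN y (Fin.last d) β γ) (φ x)) =O[𝓟 D] B := by
  simp only [hΓN]
  obtain ⟨b, rfl⟩ | rfl := Fin.eq_castSucc_or_eq_last β
  · obtain ⟨c, rfl⟩ | rfl := Fin.eq_castSucc_or_eq_last γ
    · simp only [pd_castSucc_sphereΓ_last hgt]
      exact ((isBigO_sin_two_mul_comp hf).const_mul_left _).mul_bounded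
        (isBigO_one_of_contDiff hD ((contDiff_pd (hgt b c) a).comp (contDiff_init_comp hφ)))
    · simpa only [pd_eq_zero_of_forall_eq_zero (sphereΓ_last_castSucc_last · b)]
        using isBigO_zero B (𝓟 D)
  · simpa only [pd_eq_zero_of_forall_eq_zero (sphereΓ_last_last · γ)] using isBigO_zero B (𝓟 D)

include hΓN hgt hΓt hφ hchart hD hf in
lemma isBigO_Scoef_last (p w : Fin d) (ϑ : Fin (d+1)) :
    (fun x => Scoef P (φ x) (Fin.last d) p.castSucc w.castSucc ϑ) =O[𝓟 D] B := by
  have hΓ := fun α β γ => isBigO_one_of_contDiff hD (contDiff_ΓN_comp hΓN hgt hΓt hφ hchart α β γ)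
  have hΓn := isBigO_ΓN_last hΓN hgt hφ hD hf
  have hdΓn := isBigO_pd_ΓN_last hΓN hgt hφ hD hf
  have hquad : ∀ (a : Fin d) β, (fun x => ∑ γ, P.ΓN (φ x) γ β ϑ
      * P.ΓN (φ x) (Fin.last d) a.castSucc γ) =O[𝓟 D] B :=
    fun a β => IsBigO.fun_sum fun γ _ => (hΓ γ β ϑ).bounded_mul (hΓn _ γ)
  simp only [Scoef]
  exact ((((hdΓn w _ ϑ).add (hquad w _)).add (hdΓn p _ ϑ)).add (hquad p _)).const_mul_left (1/2)
    |>.congr_left fun x => by ring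

include hΓN hgt hΓt hLC hφ hchart hD hf in
lemma isBigO_Ecoef_last (b c t : Fin d) (η : Fin (d+1)) :
    (fun x => Ecoef P (φ x) (Fin.last d) b.castSucc c.castSucc t.castSucc η) =O[𝓟 D] B := by
  have hR := fun α β γ δ => isBigO_one_of_contDiff hD (contDiff_Rc_comp
    (contDiff_ΓN_comp hΓN hgt hΓt hφ hchart) (contDiff_pd_ΓN_comp hΓN hgt hΓt hφ hchart) α β γ δ)
  have hΓn := isBigO_ΓN_last hΓN hgt hφ hD hf
  refine IsBigO.fun_sum fun γ _ => ?_
  obtain ⟨g, rfl⟩ | rfl := Fin.eq_castSucc_or_eq_last γ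
  · simpa only [Rc_last_castSucc_eq_zero hΓN hgt hLC, zero_mul, add_zero]
      using isBigO_zero B (𝓟 D)
  · exact ((hR _ _ _ _).bounded_mul (hΓn _ η)).add ((hR _ _ _ _).bounded_mul (hΓn _ η))

include hΓN hgt hΓt hP hφ hchart hD hf hdf in
lemma isBigO_Asec_last {σ : (Fin m → ℝ) → Fin (d+1) → ℝ}
    (hσ : ∀ α, ContDiff ℝ (⊤ : ℕ∞) fun x => σ x α)
    (hσn : (fun x => σ x (Fin.last d)) =O[𝓟 D] B)
    (hdσn : ∀ i, (fun x => pd i (fun z => σ z (Fin.last d)) x) =O[𝓟 D] B) :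
    (fun x => Asec P φ σ x (Fin.last d)) =O[𝓟 D] B := by
  have hΓ := contDiff_ΓN_comp hΓN hgt hΓt hφ hchart
  have hdΓ := contDiff_pd_ΓN_comp hΓN hgt hΓt hφ hchart
  have := hP.1; have := contDiff_dphi hφ; have := contDiff_Scoef_comp hΓ hdΓ
  have := fun β => contDiff_lap hP (f := fun z => φ z β) (by fun_prop)
  have := fun i α => contDiff_pd (hσ α) i
  have hΓn := isBigO_ΓN_last hΓN hgt hφ hD hf
  simp only [Asec, Aop]
  refine IsBigO.add (IsBigO.fun_sum fun ϑ _ => IsBigO.fun_sum fun i _ => ?_)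
    (IsBigO.fun_sum fun ϑ _ => ?_)
  · obtain ⟨b, rfl⟩ | rfl := Fin.eq_castSucc_or_eq_last ϑ
    · refine (isBigO_one_of_contDiff hD (by fun_prop)).bounded_mul ?_
      exact (IsBigO.fun_sum fun j _ => IsBigO.fun_sum fun β _ =>
        (isBigO_one_of_contDiff hD (by fun_prop)).bounded_mul (hΓn β _)).const_mul_left (-2)
    · exact (hdσn i).mul_bounded (isBigO_one_of_contDiff hD (by fun_prop))
  · obtain ⟨b, rfl⟩ | rfl := Fin.eq_castSucc_or_eq_last ϑ
    · refine (isBigO_one_of_contDiff hD (hσ _)).bounded_mul (IsBigO.sub ?_ ?_)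
      · exact IsBigO.fun_sum fun β _ =>
          (isBigO_one_of_contDiff hD (by fun_prop)).bounded_mul (hΓn β _)
      refine IsBigO.fun_sum fun i _ => IsBigO.fun_sum fun j _ => IsBigO.fun_sum fun β _ =>
        IsBigO.fun_sum fun ω _ => ?_
      obtain ⟨w, rfl⟩ | rfl := Fin.eq_castSucc_or_eq_last ω
      · obtain ⟨p, rfl⟩ | rfl := Fin.eq_castSucc_or_eq_last β
        · exact (isBigO_one_of_contDiff hD (by fun_prop)).bounded_mul
            (isBigO_Scoef_last hΓN hgt hΓt hφ hchart hD hf p w _)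
        · exact (((isBigO_one_of_contDiff hD (by fun_prop)).bounded_mul (hdf j)).mul_bounded
            (isBigO_one_of_contDiff hD (by fun_prop))).mul_bounded
            (isBigO_one_of_contDiff hD (by fun_prop))
      · exact ((isBigO_one_of_contDiff hD (by fun_prop)).bounded_mul (hdf i)).mul_bounded
          (isBigO_one_of_contDiff hD (by fun_prop))
    · exact hσn.mul_bounded (isBigO_one_of_contDiff hD (by fun_prop))

include hP hφ hD in
lemma isBigO_vpair_last_left {v : (Fin m → ℝ) → Fin m → Fin (d+1) → ℝ}
    (hv : ∀ i, (fun x => v x i (Fin.last d)) =O[𝓟 D] B) (β : Fin (d+1)) :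
    (fun x => vpair P φ (v x) x (Fin.last d) β) =O[𝓟 D] B :=
  isBigO_bilinear_of_left (fun i j => isBigO_one_of_contDiff hD (hP.1 i j)) hv
    fun j => isBigO_one_of_contDiff hD (contDiff_dphi hφ j β)

include hP hD hdf in
lemma isBigO_vpair_last_right {v : (Fin m → ℝ) → Fin m → Fin (d+1) → ℝ}
    (hv : ∀ i γ, ContDiff ℝ (⊤ : ℕ∞) fun x => v x i γ) (γ : Fin (d+1)) :
    (fun x => vpair P φ (v x) x γ (Fin.last d)) =O[𝓟 D] B :=
  isBigO_bilinear_of_right (fun i j => isBigO_one_of_contDiff hD (hP.1 i j))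
    (fun i => isBigO_one_of_contDiff hD (hv i γ)) hdf

include hΓN hgt hΓt hLC hP hφ hchart hD hf hdf in
lemma isBigO_FkEvenSph_last {k : ℕ}
    (hu : ∀ l ≤ k - 2, (fun x => uvar P φ l x (Fin.last d)) =O[𝓟 D] B)
    (hv : ∀ l ≤ k - 2, ∀ i, (fun x => vvar P φ l x i (Fin.last d)) =O[𝓟 D] B) :
    (fun x => FkEvenSph P φ k x (Fin.last d)) =O[𝓟 D] B := by
  have hΓ := contDiff_ΓN_comp hΓN hgt hΓt hφ hchart
  have hdΓ := contDiff_pd_ΓN_comp hΓN hgt hΓt hφ hchart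
  have := hP.1; have := contDiff_dphi hφ; have := contDiff_vvar hP hφ hΓ hdΓ
  have hu1 := fun l α => isBigO_one_of_contDiff hD (contDiff_uvar hP hφ hΓ hdΓ l α)
  have hR := fun β γ δ => isBigO_one_of_contDiff hD (contDiff_Rc_comp hΓ hdΓ (Fin.last d) β γ δ)
  have hE := fun β δ ϑ η => isBigO_one_of_contDiff hD
    (contDiff_Ecoef_comp hΓ hdΓ (Fin.last d) β δ ϑ η)
  have hR0 := fun a b c x => Rc_last_castSucc_eq_zero hΓN hgt hLC (φ x) a b c
  have hdpair : ∀ γ β, (fun x => dpair P φ φ x γ β) =O[𝓟 D] fun _ => (1 : ℝ) :=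
    fun γ β => isBigO_one_of_contDiff hD (by unfold dpair; fun_prop)
  have hvpair : ∀ l γ β, (fun x => vpair P φ (vvar P φ l x) x γ β) =O[𝓟 D] fun _ => (1 : ℝ) :=
    fun l γ β => isBigO_one_of_contDiff hD (by unfold vpair; fun_prop)
  have hdpairn : ∀ β, (fun x => dpair P φ φ x (Fin.last d) β) =O[𝓟 D] B :=
    isBigO_vpair_last_left hP hφ hD (v := fun x => dphi φ x) hdf
  have hdpairn' : ∀ γ, (fun x => dpair P φ φ x γ (Fin.last d)) =O[𝓟 D] B :=
    isBigO_vpair_last_right hP hD hdf (v := fun x => dphi φ x) (contDiff_dphi hφ)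
  have hvpairn := fun l hl => isBigO_vpair_last_left hP hφ hD (v := fun x => vvar P φ l x) (hv l hl)
  have hvpairn' := fun l =>
    isBigO_vpair_last_right hP hD hdf (v := fun x => vvar P φ l x) (contDiff_vvar hP hφ hΓ hdΓ l)
  unfold FkEvenSph
  refine ((isBigO_Asec_last hΓN hgt hΓt hP hφ hchart hD hf hdf
    (contDiff_uvar hP hφ hΓ hdΓ (k - 2)) (hu _ le_rfl) (hv _ le_rfl)).neg_left.sub
    (isBigO_curvature_contraction (hu1 _) hdpair hR (hu _ le_rfl) hdpairn hdpairn' hR0)).sub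
    (IsBigO.fun_sum fun ℓ hℓ => ?_)
  rw [Finset.mem_Icc] at hℓ
  have h₁ : k / 2 - ℓ - 1 ≤ k - 2 := by omega
  have h₂ : k / 2 + ℓ - 2 ≤ k - 2 := by omega
  exact ((isBigO_curvature_contraction (hu1 _) (hvpair _) hR (hu _ h₁) (hvpairn _ h₂)
    (hvpairn' _) hR0).add (isBigO_Ecoef_contraction (hu1 _) (hu1 _) hdpair hE (hu _ h₂) (hu _ h₁)
    hdpairn hdpairn' (isBigO_Ecoef_last hΓN hgt hΓt hLC hφ hchart hD hf))).add
    (isBigO_curvature_contraction (hu1 _) (hvpair _) hR (hu _ h₂) (hvpairn _ h₁) (hvpairn' _) hR0)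

end SphereEstimates

section NormalWeight

variable {m d : ℕ} {P : ChartData m (d+1)} {φ : (Fin m → ℝ) → Fin (d+1) → ℝ} {k : ℕ}

lemma vnorm_nonneg {ι : Type} [Fintype ι] (f : ι → ℝ) : 0 ≤ vnorm f :=
  Real.sqrt_nonneg _

lemma abs_le_vnorm {ι : Type} [Fintype ι] (f : ι → ℝ) (i : ι) : |f i| ≤ vnorm f := by
  rw [← Real.sqrt_sq_eq_abs]
  exact Real.sqrt_le_sqrt (Finset.single_le_sum (fun j _ => sq_nonneg (f j)) (Finset.mem_univ i))

def normalWeight (P : ChartData m (d+1)) (φ : (Fin m → ℝ) → Fin (d+1) → ℝ) (k : ℕ)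
    (x : Fin m → ℝ) : ℝ :=
  |φ x (Fin.last d) - Real.pi / 2|
    + vnorm (fun i : Fin m => pd i (fun w => φ w (Fin.last d) - Real.pi / 2) x)
    + (∑ l ∈ Finset.range (k-1), |uvar P φ l x (Fin.last d)|)
    + (∑ l ∈ Finset.range (k-2), vnorm (fun i : Fin m => vvar P φ l x i (Fin.last d)))
    + vnorm (fun i : Fin m => vvar P φ (k-2) x i (Fin.last d))

lemma normalWeight_terms_le (x : Fin m → ℝ) :
    |φ x (Fin.last d) - Real.pi / 2| ≤ normalWeight P φ k x
    ∧ vnorm (fun i : Fin m => pd i (fun w => φ w (Fin.last d) - Real.pi / 2) x)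
        ≤ normalWeight P φ k x
    ∧ ∑ l ∈ Finset.range (k-1), |uvar P φ l x (Fin.last d)| ≤ normalWeight P φ k x
    ∧ ∑ l ∈ Finset.range (k-2), vnorm (fun i : Fin m => vvar P φ l x i (Fin.last d))
        ≤ normalWeight P φ k x
    ∧ vnorm (fun i : Fin m => vvar P φ (k-2) x i (Fin.last d)) ≤ normalWeight P φ k x := by
  have h₁ := abs_nonneg (φ x (Fin.last d) - Real.pi / 2)
  have h₂ := vnorm_nonneg (fun i : Fin m => pd i (fun w => φ w (Fin.last d) - Real.pi / 2) x)
  have h₃ : 0 ≤ ∑ l ∈ Finset.range (k-1), |uvar P φ l x (Fin.last d)| :=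
    Finset.sum_nonneg fun _ _ => abs_nonneg _
  have h₄ : 0 ≤ ∑ l ∈ Finset.range (k-2), vnorm (fun i : Fin m => vvar P φ l x i (Fin.last d)) :=
    Finset.sum_nonneg fun _ _ => vnorm_nonneg _
  have h₅ := vnorm_nonneg (fun i : Fin m => vvar P φ (k-2) x i (Fin.last d))
  unfold normalWeight
  refine ⟨?_, ?_, ?_, ?_, ?_⟩ <;> linarith

lemma normalWeight_nonneg (x : Fin m → ℝ) : 0 ≤ normalWeight P φ k x :=
  (abs_nonneg _).trans (normalWeight_terms_le (P := P) x).1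

variable {l : Filter (Fin m → ℝ)}

lemma isBigO_sub_pi_div_two_normalWeight :
    (fun x => φ x (Fin.last d) - Real.pi / 2) =O[l] normalWeight P φ k :=
  IsBigO.of_norm_le fun x => (normalWeight_terms_le x).1

lemma isBigO_dphi_normalWeight (i : Fin m) :
    (fun x => dphi φ x i (Fin.last d)) =O[l] normalWeight P φ k :=
  IsBigO.of_norm_le fun x => by
    rw [Real.norm_eq_abs, dphi, ← pd_sub_const _ (Real.pi / 2)]
    exact (abs_le_vnorm _ i).trans (normalWeight_terms_le x).2.1

lemma isBigO_uvar_normalWeight (hk : 2 ≤ k) {j : ℕ} (hj : j ≤ k - 2) :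
    (fun x => uvar P φ j x (Fin.last d)) =O[l] normalWeight P φ k :=
  IsBigO.of_norm_le fun x =>
    (Finset.single_le_sum (f := fun j => |uvar P φ j x (Fin.last d)|)
      (fun _ _ => abs_nonneg _) (Finset.mem_range.2 (by omega))).trans
      (normalWeight_terms_le x).2.2.1

lemma isBigO_vvar_normalWeight {j : ℕ} (hj : j ≤ k - 2) (i : Fin m) :
    (fun x => vvar P φ j x i (Fin.last d)) =O[l] normalWeight P φ k := by
  refine IsBigO.of_norm_le fun x => ?_
  rw [Real.norm_eq_abs]
  refine (abs_le_vnorm (fun i => vvar P φ j x i (Fin.last d)) i).trans ?_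
  obtain hj | rfl := hj.lt_or_eq
  · exact (Finset.single_le_sum (f := fun j => vnorm fun i => vvar P φ j x i (Fin.last d))
      (fun _ _ => vnorm_nonneg _) (Finset.mem_range.2 hj)).trans (normalWeight_terms_le x).2.2.2.1
  · exact (normalWeight_terms_le x).2.2.2.2

end NormalWeight

theorem sphere_estimate_Fk_general
    {m d : ℕ} (P : ChartData m (d+1))
    (gt : (Fin d → ℝ) → Fin d → Fin d → ℝ)
    (Γt : (Fin d → ℝ) → Fin d → Fin d → Fin d → ℝ)
    (hΓN : P.ΓN = sphereΓ d gt Γt)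
    (hPdom : P.SmoothDomain)
    (hgt : ∀ a b, ContDiff ℝ (⊤ : ℕ∞) fun y => gt y a b)
    (hΓt : ∀ a b c, ContDiff ℝ (⊤ : ℕ∞) fun y => Γt y a b c)
    (hLC : LeviCivita d gt Γt)
    (φ : (Fin m → ℝ) → Fin (d+1) → ℝ) (hφ : ContDiff ℝ (⊤ : ℕ∞) φ)
    (hchart : ∀ x, 0 < φ x (Fin.last d) ∧ φ x (Fin.last d) < Real.pi)
    (k : ℕ) (hk : 4 ≤ k)
    (D : Set (Fin m → ℝ)) (hDcpt : IsCompact (closure D)) :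
    ∃ C > 0, ∀ x ∈ D,
      |FkEvenSph P φ k x (Fin.last d)|
        ≤ C * (|φ x (Fin.last d) - Real.pi / 2|
          + vnorm (fun i : Fin m => pd i (fun w => φ w (Fin.last d) - Real.pi / 2) x)
          + (∑ l ∈ Finset.range (k-1), |uvar P φ l x (Fin.last d)|)
          + (∑ l ∈ Finset.range (k-2),
              vnorm (fun i : Fin m => vvar P φ l x i (Fin.last d)))
          + vnorm (fun i : Fin m => vvar P φ (k-2) x i (Fin.last d))) := by
  obtain ⟨C, hC, hbound⟩ := (isBigO_FkEvenSph_last hΓN hgt hΓt hLC hPdom hφ hchart hDcpt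
    isBigO_sub_pi_div_two_normalWeight isBigO_dphi_normalWeight
    (fun _ => isBigO_uvar_normalWeight (by omega : 2 ≤ k))
    (fun _ => isBigO_vvar_normalWeight)).exists_pos
  refine ⟨C, hC, fun x hx => ?_⟩
  have hx := isBigOWith_principal.1 hbound x hx
  rwa [Real.norm_eq_abs, Real.norm_eq_abs, abs_of_nonneg (normalWeight_nonneg x)] at hx

/-- (Lemma 2.11 of the paper.)
Let `φ : M → S^n` (`n = d+1`) be a polyharmonic map of even order `k = 2s ≥ 4` in
the equator coordinates, with `f = φ^n - π/2`, and let `(F^k)^n` be the `n`-th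
component of the local right-hand side of `Δu_{k-2} = F^k`. Then on any open set
`D` with compact closure contained in the chart domain `U` there exists `C > 0` with
`|(F^k)^n| ≤ C( |f| + |df| + Σ_{ℓ=0}^{k-2}|u^n_ℓ| + Σ_{ℓ=0}^{k-3}|v^n_ℓ| + |∇u^n_{k-2}| )`. -/
theorem sphere_estimate_Fk
    {m d : ℕ} (P : ChartData m (d+1))
    (gt : (Fin d → ℝ) → Fin d → Fin d → ℝ)
    (Γt : (Fin d → ℝ) → Fin d → Fin d → Fin d → ℝ)
    (hΓN : P.ΓN = sphereΓ d gt Γt)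
    (hPdom : P.SmoothDomain) (hPriem : P.Riemannian)
    (hgt : ∀ a b, ContDiff ℝ (⊤ : ℕ∞) fun y => gt y a b)
    (hΓt : ∀ a b c, ContDiff ℝ (⊤ : ℕ∞) fun y => Γt y a b c)
    (hLC : LeviCivita d gt Γt)
    (U : Set (Fin m → ℝ)) (hUopen : IsOpen U)
    (φ : (Fin m → ℝ) → Fin (d+1) → ℝ) (hφ : ContDiff ℝ (⊤ : ℕ∞) φ)
    (hchart : ∀ x, 0 < φ x (Fin.last d) ∧ φ x (Fin.last d) < Real.pi)
    (k : ℕ) (hk : 4 ≤ k) (hkeven : Even k)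
    (hpoly : ∀ (x : Fin m → ℝ) (α : Fin (d+1)), tauK P φ k x α = 0)
    (D : Set (Fin m → ℝ)) (hDopen : IsOpen D) (hDcpt : IsCompact (closure D))
    (hDsub : closure D ⊆ U) :
    ∃ C > 0, ∀ x ∈ D,
      |FkEvenSph P φ k x (Fin.last d)|
        ≤ C * (|φ x (Fin.last d) - Real.pi / 2|
          + vnorm (fun i : Fin m => pd i (fun w => φ w (Fin.last d) - Real.pi / 2) x)
          + (∑ l ∈ Finset.range (k-1), |uvar P φ l x (Fin.last d)|)
          + (∑ l ∈ Finset.range (k-2),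
              vnorm (fun i : Fin m => vvar P φ l x i (Fin.last d)))
          + vnorm (fun i : Fin m => vvar P φ (k-2) x i (Fin.last d))) :=
  sphere_estimate_Fk_general P gt Γt hΓN hPdom hgt hΓt hLC φ hφ hchart k hk D hDcpt

end Polyharm
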